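/- The 6×6 system matrix of the three-mass circular chain has exactly three distinct eigenvalues: λ₁ = 0, λ₂ = (-3γ - i√(12MG - 9γ²))/(2M), λ₃ = (-3γ + i√(12MG - 9γ²))/(2M), each with algebraic multiplicity 2. -/

import Mathlib

open Polynomial

/-- The system matrix of the three-mass circular chain. -/
noncomputable def Smat (G M γ : ℝ) : Matrix (Fin 6) (Fin 6) ℂ :=
  !![0, 0, 0, 1/(M:ℂ), 0, 0;
     0, 0, 0, 0, 1/(M:ℂ), 0;
     0, 0, 0, 0, 0, 1/(M:ℂ);
     -2*(G:ℂ), (G:ℂ), (G:ℂ), -2*(γ:ℂ)/(M:ℂ), (γ:ℂ)/(M:ℂ), (γ:ℂ)/(M:ℂ);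
     (G:ℂ), -2*(G:ℂ), (G:ℂ), (γ:ℂ)/(M:ℂ), -2*(γ:ℂ)/(M:ℂ), (γ:ℂ)/(M:ℂ);
     (G:ℂ), (G:ℂ), -2*(G:ℂ), (γ:ℂ)/(M:ℂ), (γ:ℂ)/(M:ℂ), -2*(γ:ℂ)/(M:ℂ)]

noncomputable def lam2 (G M γ : ℝ) : ℂ :=
  (-3*(γ:ℂ) - Complex.I * ((Real.sqrt (12*M*G - 9*γ^2) : ℝ) : ℂ)) / (2*(M:ℂ))

noncomputable def lam3 (G M γ : ℝ) : ℂ :=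
  (-3*(γ:ℂ) + Complex.I * ((Real.sqrt (12*M*G - 9*γ^2) : ℝ) : ℂ)) / (2*(M:ℂ))

namespace Stmt4Aux

open Matrix

noncomputable def A3 : Matrix (Fin 3) (Fin 3) ℂ := !![-2,1,1;1,-2,1;1,1,-2]

@[simp]
lemma cons_val_five' {α : Type*} {m : ℕ} (x : α) (u : Fin m.succ.succ.succ.succ.succ → α) :
    Matrix.vecCons x u 5 = Matrix.vecHead (Matrix.vecTail (Matrix.vecTail (Matrix.vecTail (Matrix.vecTail u)))) :=
  rfl

set_option maxHeartbeats 1000000 in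
lemma smat_eq (G M γ : ℝ) : Smat G M γ =
    Matrix.reindex (finSumFinEquiv (m := 3) (n := 3)) finSumFinEquiv
      (Matrix.fromBlocks 0 ((1/(M:ℂ)) • (1 : Matrix (Fin 3) (Fin 3) ℂ))
        ((G:ℂ) • A3) (((γ:ℂ)/(M:ℂ)) • A3)) := by
  have h0 : (finSumFinEquiv (m := 3) (n := 3)).symm (0 : Fin 6) = Sum.inl (0 : Fin 3) := rfl
  have h1 : (finSumFinEquiv (m := 3) (n := 3)).symm (1 : Fin 6) = Sum.inl (1 : Fin 3) := rfl
  have h2 : (finSumFinEquiv (m := 3) (n := 3)).symm (2 : Fin 6) = Sum.inl (2 : Fin 3) := rfl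
  have h3 : (finSumFinEquiv (m := 3) (n := 3)).symm (3 : Fin 6) = Sum.inr (0 : Fin 3) := rfl
  have h4 : (finSumFinEquiv (m := 3) (n := 3)).symm (4 : Fin 6) = Sum.inr (1 : Fin 3) := rfl
  have h5 : (finSumFinEquiv (m := 3) (n := 3)).symm (5 : Fin 6) = Sum.inr (2 : Fin 3) := rfl
  ext i j
  fin_cases i <;> fin_cases j <;>
    simp [Smat, A3, Matrix.fromBlocks, Matrix.one_apply, h0, h1, h2, h3, h4, h5] <;> ring_nf

set_option maxHeartbeats 1000000 in
lemma block_charpoly (G M γ : ℝ) (hM : (M:ℂ) ≠ 0) :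
    (Matrix.fromBlocks 0 ((1/(M:ℂ)) • (1 : Matrix (Fin 3) (Fin 3) ℂ))
        ((G:ℂ) • A3) (((γ:ℂ)/(M:ℂ)) • A3)).charpoly =
      X^2 * (X^2 + C (3*(γ:ℂ)/(M:ℂ)) * X + C (3*(G:ℂ)/(M:ℂ)))^2 := by
  rw [Matrix.charpoly, charmatrix_fromBlocks]
  set A1 := charmatrix (0 : Matrix (Fin 3) (Fin 3) ℂ) with hA1
  set B1 := -(((1/(M:ℂ)) • (1 : Matrix (Fin 3) (Fin 3) ℂ)).map C) with hB1
  set C1 := -(((G:ℂ) • A3).map C) with hC1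
  set D1 := charmatrix ((((γ:ℂ)/(M:ℂ)) • A3)) with hD1
  have hswap : fromBlocks A1 B1 C1 D1
      = (fromBlocks B1 A1 D1 C1).submatrix id ⇑(Equiv.sumComm (Fin 3) (Fin 3)) := by
    ext i j; rcases i with i|i <;> rcases j with j|j <;> rfl
  have hCM : C ((M:ℂ)⁻¹) * C ((M:ℂ)) = (1 : ℂ[X]) := by
    rw [← _root_.map_mul, inv_mul_cancel₀ hM, Polynomial.C_1]
  letI : Invertible B1 := ⟨!![-(C (M:ℂ)),0,0;0,-(C (M:ℂ)),0;0,0,-(C (M:ℂ))],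
    by ext i j : 2
       fin_cases i <;> fin_cases j <;>
         simp [hB1, Matrix.mul_apply, Fin.sum_univ_succ, Matrix.one_apply, Matrix.map_apply,
           Matrix.vecHead, Matrix.vecTail,
           one_div, apply_ite, ← _root_.map_mul, inv_mul_cancel₀ hM, mul_inv_cancel₀ hM],
    by ext i j : 2
       fin_cases i <;> fin_cases j <;>
         simp [hB1, Matrix.mul_apply, Fin.sum_univ_succ, Matrix.one_apply, Matrix.map_apply,
           Matrix.vecHead, Matrix.vecTail,
           one_div, apply_ite, ← _root_.map_mul, inv_mul_cancel₀ hM, mul_inv_cancel₀ hM]⟩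
  have hinv : ⅟B1 = !![-(C (M:ℂ)),0,0;0,-(C (M:ℂ)),0;0,0,-(C (M:ℂ))] := rfl
  have hsign : Equiv.Perm.sign (Equiv.sumComm (Fin 3) (Fin 3)) = -1 := by decide
  rw [hswap, Matrix.det_permute', det_fromBlocks₁₁, hsign, hinv]
  rw [Matrix.det_fin_three, Matrix.det_fin_three]
  simp only [hA1, hB1, hC1, hD1, Matrix.sub_apply, Matrix.mul_apply, Fin.sum_univ_succ,
    Fin.sum_univ_zero, Matrix.neg_apply, Matrix.map_apply, Matrix.smul_apply,
    Matrix.one_apply, charmatrix_apply, Matrix.diagonal_apply, A3,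
    Matrix.cons_val', Matrix.cons_val_zero, Matrix.cons_val_one, Matrix.head_cons,
    Matrix.head_fin_const, Matrix.cons_val_fin_one, Matrix.empty_val',
    Matrix.cons_val_two, Matrix.vecTail, Matrix.vecHead, Function.comp]
  simp +decide [Matrix.vecHead, Matrix.vecTail]
  simp only [div_eq_mul_inv, _root_.map_mul, map_ofNat]
  linear_combination (X^2*( (X^2+3*(C (γ:ℂ))*(C ((M:ℂ)⁻¹))*X)^2*((C ((M:ℂ)⁻¹)*C (M:ℂ))^2 + C ((M:ℂ)⁻¹)*C (M:ℂ) + 1)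
    + 6*(C (G:ℂ))*(C ((M:ℂ)⁻¹))*(X^2+3*(C (γ:ℂ))*(C ((M:ℂ)⁻¹))*X)*(C ((M:ℂ)⁻¹)*C (M:ℂ) + 1)
    + 9*(C (G:ℂ))^2*(C ((M:ℂ)⁻¹))^2 )) * hCM

end Stmt4Aux

/-- The circular-chain matrix has exactly the three distinct eigenvalues
`0`, `λ₂`, `λ₃`, each of algebraic multiplicity `2`. -/
theorem stmt4 (G M γ : ℝ) (hG : 0 < G) (hM : 0 < M) (hγ : 0 < γ)
    (h : 0 < 12*M*G - 9*γ^2) :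
    (Smat G M γ).charpoly =
      (X - C 0) ^ 2 * (X - C (lam2 G M γ)) ^ 2 * (X - C (lam3 G M γ)) ^ 2 ∧
    (0 : ℂ) ≠ lam2 G M γ ∧ (0 : ℂ) ≠ lam3 G M γ ∧ lam2 G M γ ≠ lam3 G M γ := by
  have hM' : (M:ℂ) ≠ 0 := by exact_mod_cast hM.ne'
  have hG' : (G:ℂ) ≠ 0 := by exact_mod_cast hG.ne'
  have hs0 : (0:ℝ) < Real.sqrt (12*M*G - 9*γ^2) := Real.sqrt_pos.mpr h
  have hsC : ((Real.sqrt (12*M*G - 9*γ^2) : ℝ) : ℂ) ≠ 0 := by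
    exact_mod_cast hs0.ne'
  have hs : (((Real.sqrt (12*M*G - 9*γ^2) : ℝ) : ℂ))^2 = 12*(M:ℂ)*(G:ℂ) - 9*(γ:ℂ)^2 := by
    rw [← Complex.ofReal_pow, Real.sq_sqrt h.le]
    push_cast; ring
  have hsum : lam2 G M γ + lam3 G M γ = -(3*(γ:ℂ)/(M:ℂ)) := by
    unfold lam2 lam3
    field_simp
    ring
  have hprod : lam2 G M γ * lam3 G M γ = 3*(G:ℂ)/(M:ℂ) := by
    unfold lam2 lam3
    field_simp
    linear_combination (-(((Real.sqrt (12*M*G - 9*γ^2) : ℝ) : ℂ))^2) * Complex.I_sq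
      + hs
  have hprodne : lam2 G M γ * lam3 G M γ ≠ 0 := by
    rw [hprod]
    exact div_ne_zero (by simpa using hG') hM'
  have h2 : (0 : ℂ) ≠ lam2 G M γ := fun hh => hprodne (by rw [← hh, zero_mul])
  have h3 : (0 : ℂ) ≠ lam3 G M γ := fun hh => hprodne (by rw [← hh, mul_zero])
  have h23 : lam2 G M γ ≠ lam3 G M γ := by
    intro hh
    have hd : lam2 G M γ - lam3 G M γ =
        -(Complex.I * ((Real.sqrt (12*M*G - 9*γ^2) : ℝ) : ℂ)) / (M:ℂ) := by
      unfold lam2 lam3; field_simp; ring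
    rw [hh, sub_self] at hd
    field_simp at hd
    rw [zero_mul, eq_comm, neg_eq_zero] at hd; exact mul_ne_zero Complex.I_ne_zero hsC hd
  refine ⟨?_, h2, h3, h23⟩
  have key : (X - C (lam2 G M γ)) * (X - C (lam3 G M γ))
      = X^2 + C (3*(γ:ℂ)/(M:ℂ)) * X + C (3*(G:ℂ)/(M:ℂ)) := by
    have e1 : C (lam2 G M γ) + C (lam3 G M γ) = C (-(3*(γ:ℂ)/(M:ℂ))) := by
      rw [← map_add, hsum]
    have e2 : C (lam2 G M γ) * C (lam3 G M γ) = C (3*(G:ℂ)/(M:ℂ)) := by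
      rw [← _root_.map_mul, hprod]
    rw [map_neg] at e1
    linear_combination (-X) * e1 + e2
  rw [Stmt4Aux.smat_eq, Matrix.charpoly_reindex, Stmt4Aux.block_charpoly G M γ hM', map_zero,
    sub_zero, ← key]
  ring
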